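/- arXiv:1306.5419 — 2 statements merged into one kernel-verified Lean document; each statement's English description precedes it below -/
import Mathlib

section
/- Let Λ be a partially ordered set as in the context. If T and T′ are jeu de taquin equivalent increasing tableaux of skew shapes in Λ, and [a,b] is any integer interval, then the restrictions T|_{[a,b]} and T′|_{[a,b]} (obtained by removing from each tableau all boxes whose value lies outside [a,b]; these are again increasing tableaux of skew shapes in Λ) are jeu de taquin equivalent. -/
open Classical

noncomputable section

/-- A straight shape in a poset: a finite lower order ideal, given as a `Finset`. -/
def StraightShape {L : Type} [PartialOrder L] (lam : Finset L) : Prop :=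
  ∀ a ∈ lam, ∀ b : L, b ≤ a → b ∈ lam

/-- The shape (set of boxes) of a partially defined tableau. -/
def shapeOf {L : Type} {V : Type} (T : L → Option V) : Set L := {α | T α ≠ none}

/-- `lam ⊆ nu` is a pair of straight shapes, defining the skew shape `nu / lam`. -/
def IsSkewPair {L : Type} [PartialOrder L] (lam nu : Finset L) : Prop :=
  StraightShape lam ∧ StraightShape nu ∧ lam ⊆ nu

/-- `T` is defined on a skew shape `nu / lam`. -/
def HasSkewShape {L : Type} [PartialOrder L] (T : L → Option ℤ) : Prop :=
  ∃ lam nu : Finset L, IsSkewPair lam nu ∧ shapeOf T = (nu : Set L) \ (lam : Set L)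

/-- `T` is strictly increasing along the partial order. -/
def Increasing {L : Type} [PartialOrder L] (T : L → Option ℤ) : Prop :=
  ∀ a b : L, a < b → ∀ x y : ℤ, T a = some x → T b = some y → x < y

/-- An increasing tableau of skew shape. -/
def IncreasingSkewTableau {L : Type} [PartialOrder L] (T : L → Option ℤ) : Prop :=
  HasSkewShape T ∧ Increasing T

/-- Two boxes are neighbors if one covers the other. -/
def Neighbor {L : Type} [PartialOrder L] (a b : L) : Prop := a ⋖ b ∨ b ⋖ a

/-- The swap operation `swap_{s,s'}`. -/
def swapVal {L : Type} [PartialOrder L] {V : Type} (s s' : V) (T : L → Option V) :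
    L → Option V := fun α =>
  if T α = some s ∧ ∃ β, Neighbor α β ∧ T β = some s' then some s'
  else if T α = some s' ∧ ∃ β, Neighbor α β ∧ T β = some s then some s
  else T α

/-- Integer values extended with a dot `•`. -/
abbrev ZDot : Type := ℤ ⊕ Unit

def toDotted {L : Type} (T : L → Option ℤ) : L → Option ZDot := fun α => (T α).map Sum.inl

/-- Place a dot in every box of `C`. -/
def addDots {L : Type} (C : Finset L) (T : L → Option ZDot) : L → Option ZDot := fun α =>
  if α ∈ C then some (Sum.inr ()) else T α

/-- Restrict a dotted tableau to its integer-valued boxes. -/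
def restrictInt {L : Type} (T : L → Option ZDot) : L → Option ℤ := fun α =>
  (T α).bind (Sum.elim some fun _ => none)

/-- Apply `swap_{a,•}, swap_{a+1,•}, …, swap_{a+n-1,•}` in this (increasing) order. -/
def swapUp {L : Type} [PartialOrder L] (a : ℤ) : ℕ → (L → Option ZDot) → (L → Option ZDot)
  | 0, T => T
  | n + 1, T => swapVal (Sum.inl (a + n)) (Sum.inr ()) (swapUp a n T)

/-- Apply `swap_{b,•}, swap_{b-1,•}, …, swap_{b-n+1,•}` in this (decreasing) order. -/
def swapDown {L : Type} [PartialOrder L] (b : ℤ) : ℕ → (L → Option ZDot) → (L → Option ZDot)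
  | 0, T => T
  | n + 1, T => swapVal (Sum.inl (b - n)) (Sum.inr ()) (swapDown b n T)

/-- All values of `T` lie in the interval `[a, b]`. -/
def ValuesIn {L : Type} (T : L → Option ℤ) (a b : ℤ) : Prop :=
  ∀ (α : L) (x : ℤ), T α = some x → a ≤ x ∧ x ≤ b

/-- `T'` is obtained from `T` by a single forward jeu de taquin slide `jdt_C`,
starting from a set `C` of maximal boxes of the inner shape. -/
def IsForwardSlide {L : Type} [PartialOrder L] (T T' : L → Option ℤ) : Prop :=
  ∃ (lam nu C : Finset L) (a b : ℤ),
    IsSkewPair lam nu ∧ shapeOf T = (nu : Set L) \ (lam : Set L) ∧ ValuesIn T a b ∧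
    (∀ c ∈ C, c ∈ lam ∧ ∀ d ∈ lam, ¬ c < d) ∧
    T' = restrictInt (swapUp a (b - a + 1).toNat (addDots C (toDotted T)))

/-- `T'` is obtained from `T` by a single reverse jeu de taquin slide,
starting from a set `C` of minimal boxes of the complement of the outer shape. -/
def IsReverseSlide {L : Type} [PartialOrder L] (T T' : L → Option ℤ) : Prop :=
  ∃ (lam nu C : Finset L) (a b : ℤ),
    IsSkewPair lam nu ∧ shapeOf T = (nu : Set L) \ (lam : Set L) ∧ ValuesIn T a b ∧
    (∀ c ∈ C, c ∉ nu ∧ ∀ d : L, d ∉ nu → ¬ d < c) ∧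
    T' = restrictInt (swapDown b (b - a + 1).toNat (addDots C (toDotted T)))

/-- Jeu de taquin equivalence: a finite sequence of forward and reverse slides. -/
def JdtEquiv {L : Type} [PartialOrder L] (T T' : L → Option ℤ) : Prop :=
  Relation.ReflTransGen (fun A B => IsForwardSlide A B ∨ IsReverseSlide A B) T T'

/-- `T` is defined on a straight shape. -/
def HasStraightShape {L : Type} [PartialOrder L] (T : L → Option ℤ) : Prop :=
  ∃ lam : Finset L, StraightShape lam ∧ shapeOf T = (lam : Set L)

/-- `U` is a rectification of `T`: a straight-shape tableau obtained by forward slides. -/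
def RectifiesTo {L : Type} [PartialOrder L] (T U : L → Option ℤ) : Prop :=
  Relation.ReflTransGen IsForwardSlide T U ∧ HasStraightShape U

/-- Unique rectification target. -/
def IsURT {L : Type} [PartialOrder L] (U : L → Option ℤ) : Prop :=
  HasStraightShape U ∧ Increasing U ∧
    ∀ T : L → Option ℤ, IncreasingSkewTableau T → RectifiesTo T U →
      ∀ U' : L → Option ℤ, RectifiesTo T U' → U' = U

/-- The minimal increasing tableau of a shape `θ`: each box `α` receives the maximal
cardinality of a totally ordered subset of `θ` having `α` as its maximal element. -/
def minTab {L : Type} [PartialOrder L] (θ : Finset L) : L → Option ℤ := fun α =>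
  if α ∈ θ then
    some ((sSup {n : ℕ | ∃ s : Finset L, (s : Set L) ⊆ (θ : Set L) ∧
      (∀ a ∈ s, ∀ b ∈ s, a ≤ b ∨ b ≤ a) ∧ α ∈ s ∧ (∀ a ∈ s, a ≤ α) ∧ s.card = n} : ℕ) : ℤ)
  else none

/-- A unique rectification poset. -/
def IsURP (L : Type) [PartialOrder L] : Prop :=
  ∀ lam : Finset L, StraightShape lam → IsURT (minTab lam)

/-- The structure constant `c^ν_{λ,μ}`: the number of increasing tableaux of
shape `ν/λ` that have the minimal increasing tableau `M_μ` as a rectification. -/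
def ccoef {L : Type} [PartialOrder L] (lam mu nu : Finset L) : ℕ :=
  Set.ncard {T : L → Option ℤ | Increasing T ∧ shapeOf T = (nu : Set L) \ (lam : Set L) ∧
    RectifiesTo T (minTab mu)}

/-- The restriction `T|_{[a,b]}`: remove all boxes whose value lies outside `[a,b]`. -/
def restrictVals {L : Type} (T : L → Option ℤ) (a b : ℤ) : L → Option ℤ := fun α =>
  (T α).bind fun x => if a ≤ x ∧ x ≤ b then some x else none

/-!
Jeu de taquin equivalence is generated by single slides, so it suffices to show that restricting
both ends of one slide to a window `[a, b]` gives again a slide, or two equal tableaux. Passing to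
the dual poset and negating the values turns a reverse slide into a forward one.

During the forward slide `jdt_C(T)`, once the values `≤ k` have been swapped, the dots form an
antichain, every value below a dot is `≤ k`, every value above a dot is `> k`, and the values
`> k` are still where `T` has them. Let `C'` be the set of dots present when the values `< a` have
been swapped. The swap of a value `v` only inspects the boxes holding `v` or a dot, so the swaps
of `a, …, b` act on `T|[a,b]` with dots `C'` as they act on the full tableau, and the later swaps
do not move the values `≤ b`. Hence `jdt_C(T)|[a,b] = jdt_C'(T|[a,b])`, and the invariant shows
that `C'` consists of maximal boxes of the inner shape of `T|[a,b]`.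
-/

section Swap

variable {L V : Type} [PartialOrder L]

theorem swapVal_eq_none_iff {s s' : V} {F : L → Option V} {α : L} :
    swapVal s s' F α = none ↔ F α = none := by
  unfold swapVal
  split_ifs <;> simp_all

@[simp]
theorem shapeOf_swapVal (s s' : V) (F : L → Option V) :
    shapeOf (swapVal s s' F) = shapeOf F :=
  Set.ext fun _ => not_congr swapVal_eq_none_iff

theorem exists_eq_of_swapVal_eq {s s' v : V} {F : L → Option V} {α : L}
    (h : swapVal s s' F α = some v) : ∃ β, F β = some v := by
  unfold swapVal at h
  split_ifs at h with h₁ h₂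
  · obtain ⟨β, -, hβ⟩ := h₁.2
    exact ⟨β, hβ.trans (congrArg some (Option.some_injective _ h))⟩
  · obtain ⟨β, -, hβ⟩ := h₂.2
    exact ⟨β, hβ.trans (congrArg some (Option.some_injective _ h))⟩
  · exact ⟨α, h⟩

theorem swapVal_apply_congr {s s' : V} {F G : L → Option V} {α : L} (hα : F α = G α)
    (hs : ∀ β, F β = some s ↔ G β = some s)
    (hs' : ∀ β, F β = some s' ↔ G β = some s') :
    swapVal s s' F α = swapVal s s' G α := by
  simp only [swapVal, hα, hs, hs']

end Swap

abbrev dot : ZDot := Sum.inr ()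

section DottedSwap

variable {L : Type} [PartialOrder L] {F : L → Option ZDot} {α : L} {v x : ℤ}

theorem swapVal_eq_dot_iff :
    swapVal (.inl v) dot F α = some dot ↔
      (F α = some (.inl v) ∧ ∃ β, Neighbor α β ∧ F β = some dot) ∨
        (F α = some dot ∧ ¬ ∃ β, Neighbor α β ∧ F β = some (.inl v)) := by
  unfold swapVal
  split_ifs <;> rcases hF : F α with _ | _ | _ <;> simp_all

theorem swapVal_eq_inl_iff :
    swapVal (.inl v) dot F α = some (.inl x) ↔
      (x = v ∧ F α = some dot ∧ ∃ β, Neighbor α β ∧ F β = some (.inl v)) ∨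
        (F α = some (.inl x) ∧ ¬ (x = v ∧ ∃ β, Neighbor α β ∧ F β = some dot)) := by
  unfold swapVal
  split_ifs <;> rcases hF : F α with _ | _ | _ <;> simp_all [eq_comm]; rintro rfl; assumption

theorem swapVal_eq_inl_iff_of_ne (hx : x ≠ v) :
    swapVal (.inl v) dot F α = some (.inl x) ↔ F α = some (.inl x) := by
  simp [swapVal_eq_inl_iff, hx]

end DottedSwap

section SwapUp

variable {L : Type} [PartialOrder L]

theorem swapUp_add (a : ℤ) (m n : ℕ) (D : L → Option ZDot) :
    swapUp a (m + n) D = swapUp (a + m) n (swapUp a m D) := by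
  induction n with
  | zero => rfl
  | succ n ih =>
    rw [← Nat.add_assoc, swapUp, ih, swapUp, Nat.cast_add, add_assoc]

@[simp]
theorem shapeOf_swapUp (a : ℤ) (n : ℕ) (D : L → Option ZDot) :
    shapeOf (swapUp a n D) = shapeOf D := by
  induction n with
  | zero => rfl
  | succ n ih => rw [swapUp, shapeOf_swapVal, ih]

theorem exists_eq_of_swapUp_eq {a : ℤ} {n : ℕ} {D : L → Option ZDot} {α : L} {v : ZDot}
    (h : swapUp a n D α = some v) : ∃ β, D β = some v := by
  induction n generalizing α with
  | zero => exact ⟨α, h⟩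
  | succ n ih =>
    obtain ⟨β, hβ⟩ := exists_eq_of_swapVal_eq h
    exact ih hβ

theorem swapUp_eq_inl_iff_of_notMem {a x : ℤ} {n : ℕ} (hx : ¬ (a ≤ x ∧ x < a + n))
    (D : L → Option ZDot) (α : L) :
    swapUp a n D α = some (.inl x) ↔ D α = some (.inl x) := by
  induction n with
  | zero => rfl
  | succ n ih =>
    rw [swapUp, swapVal_eq_inl_iff_of_ne (by omega), ih (by omega)]

end SwapUp

theorem Set.Finite.exists_covBy_le_of_lt {P : Type} [PartialOrder P] {S : Set P}
    (hfin : S.Finite) (hconn : S.OrdConnected) {α β : P} (hα : α ∈ S) (hβ : β ∈ S)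
    (h : α < β) : ∃ γ ∈ S, α ⋖ γ ∧ γ ≤ β := by
  have hsub : Set.Ioc α β ⊆ S := Set.Ioc_subset_Icc_self.trans (hconn.out hα hβ)
  obtain ⟨γ, hγ⟩ := (hfin.subset hsub).exists_minimal ⟨β, h, le_rfl⟩
  refine ⟨γ, hsub hγ.prop, ⟨hγ.prop.1, fun z hz hzγ => ?_⟩, hγ.prop.2⟩
  exact hγ.not_lt ⟨hz, hzγ.le.trans hγ.prop.2⟩ hzγ

section Invariant

variable {L : Type} [PartialOrder L]

/-- The state of a forward slide once the values `≤ k` have been swapped. -/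
structure SlideInvariant (k : ℤ) (F : L → Option ZDot) : Prop where
  finite : (shapeOf F).Finite
  ordConnected : (shapeOf F).OrdConnected
  lt_of_lt : ∀ ⦃α β x y⦄, α < β → F α = some (.inl x) → F β = some (.inl y) →
    x < y
  lt_of_dot_lt : ∀ ⦃α β y⦄, α < β → F α = some dot → F β = some (.inl y) → k < y
  le_of_lt_dot : ∀ ⦃α β x⦄, α < β → F α = some (.inl x) → F β = some dot → x ≤ k
  not_dot_lt_dot : ∀ ⦃α β⦄, α < β → F α = some dot → F β = some dot → False

variable {k : ℤ} {F : L → Option ZDot}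

theorem SlideInvariant.covBy_of_dot_lt_next (hF : SlideInvariant k F) {α β : L} (h : α < β)
    (hα : F α = some dot) (hβ : F β = some (.inl (k + 1))) : α ⋖ β := by
  have hmem : ∀ {γ w}, F γ = some w → γ ∈ shapeOf F := fun h => by simp [shapeOf, h]
  obtain ⟨γ, hγ, hαγ, hγβ⟩ :=
    hF.finite.exists_covBy_le_of_lt hF.ordConnected (hmem hα) (hmem hβ) h
  obtain rfl | hγβ := hγβ.eq_or_lt
  · exact hαγ
  rcases hFγ : F γ with _ | z | _
  · exact absurd hFγ hγ
  · have := hF.lt_of_dot_lt hαγ.lt hα hFγ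
    have := hF.lt_of_lt hγβ hFγ hβ
    omega
  · exact (hF.not_dot_lt_dot hαγ.lt hα hFγ).elim

theorem SlideInvariant.swapVal (hF : SlideInvariant k F) :
    SlideInvariant (k + 1) (swapVal (.inl (k + 1)) dot F) where
  finite := (shapeOf_swapVal _ _ F).symm ▸ hF.finite
  ordConnected := (shapeOf_swapVal _ _ F).symm ▸ hF.ordConnected
  lt_of_lt α β x y h hα hβ := by
    rcases swapVal_eq_inl_iff.mp hα with ⟨rfl, hFα, -⟩ | ⟨hFα, -⟩ <;>
      rcases swapVal_eq_inl_iff.mp hβ with ⟨rfl, hFβ, -⟩ | ⟨hFβ, hβ'⟩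
    · exact (hF.not_dot_lt_dot h hFα hFβ).elim
    · have hy := hF.lt_of_dot_lt h hFα hFβ
      obtain rfl | hy := (Int.add_one_le_of_lt hy).eq_or_lt
      · exact (hβ' ⟨rfl, α, Or.inr (hF.covBy_of_dot_lt_next h hFα hFβ), hFα⟩).elim
      · exact hy
    · have := hF.le_of_lt_dot h hFα hFβ
      omega
    · exact hF.lt_of_lt h hFα hFβ
  lt_of_dot_lt α β y h hα hβ := by
    rcases swapVal_eq_dot_iff.mp hα with ⟨hFα, -⟩ | ⟨hFα, hα'⟩ <;>
      rcases swapVal_eq_inl_iff.mp hβ with ⟨rfl, hFβ, -⟩ | ⟨hFβ, -⟩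
    · have := hF.le_of_lt_dot h hFα hFβ
      omega
    · exact hF.lt_of_lt h hFα hFβ
    · exact (hF.not_dot_lt_dot h hFα hFβ).elim
    · have hy := hF.lt_of_dot_lt h hFα hFβ
      obtain rfl | hy := (Int.add_one_le_of_lt hy).eq_or_lt
      · exact (hα' ⟨β, Or.inl (hF.covBy_of_dot_lt_next h hFα hFβ), hFβ⟩).elim
      · exact hy
  le_of_lt_dot α β x h hα hβ := by
    rcases swapVal_eq_inl_iff.mp hα with ⟨rfl, -, -⟩ | ⟨hFα, -⟩
    · exact le_rfl
    rcases swapVal_eq_dot_iff.mp hβ with ⟨hFβ, -⟩ | ⟨hFβ, -⟩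
    · exact (hF.lt_of_lt h hFα hFβ).le
    · exact (hF.le_of_lt_dot h hFα hFβ).trans (Int.le_add_one le_rfl)
  not_dot_lt_dot α β h hα hβ := by
    rcases swapVal_eq_dot_iff.mp hα with ⟨hFα, -⟩ | ⟨hFα, hα'⟩ <;>
      rcases swapVal_eq_dot_iff.mp hβ with ⟨hFβ, -⟩ | ⟨hFβ, -⟩
    · exact (hF.lt_of_lt h hFα hFβ).false
    · have := hF.le_of_lt_dot h hFα hFβ
      omega
    · exact hα' ⟨β, Or.inl (hF.covBy_of_dot_lt_next h hFα hFβ), hFβ⟩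
    · exact hF.not_dot_lt_dot h hFα hFβ

theorem SlideInvariant.swapUp {a : ℤ} {D : L → Option ZDot} (hD : SlideInvariant (a - 1) D)
    (n : ℕ) : SlideInvariant (a - 1 + n) (swapUp a n D) := by
  induction n with
  | zero => simpa [_root_.swapUp] using hD
  | succ n ih =>
    have h := ih.swapVal
    rw [show a - 1 + (n : ℤ) + 1 = a + n by ring] at h
    convert h using 1
    · push_cast
      ring
    · rfl

end Invariant

section Start

variable {L : Type} {T : L → Option ℤ} {C : Finset L}

theorem shapeOf_addDots_toDotted : shapeOf (addDots C (toDotted T)) = shapeOf T ∪ C := by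
  ext α
  by_cases hα : α ∈ C <;> simp [shapeOf, addDots, toDotted, hα]

theorem addDots_toDotted_eq_dot_iff {α : L} :
    addDots C (toDotted T) α = some dot ↔ α ∈ C := by
  by_cases hα : α ∈ C <;> simp [addDots, toDotted, hα]

theorem eq_some_of_addDots_toDotted_eq_inl {α : L} {x : ℤ}
    (h : addDots C (toDotted T) α = some (.inl x)) : T α = some x := by
  by_cases hα : α ∈ C <;> simp_all [addDots, toDotted]

theorem addDots_toDotted_eq_inl_iff (hC : ∀ c ∈ C, T c = none) {α : L} {x : ℤ} :
    addDots C (toDotted T) α = some (.inl x) ↔ T α = some x := by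
  by_cases hα : α ∈ C <;> simp [addDots, toDotted, hα, hC]

theorem slideInvariant_addDots [PartialOrder L] {A : ℤ} (hT : Increasing T)
    (hA : ∀ α x, T α = some x → A ≤ x)
    (hC : ∀ c ∈ C, T c = none) (hCanti : ∀ c ∈ C, ∀ d ∈ C, ¬ c < d)
    (hbelow : ∀ c ∈ C, ∀ α < c, T α = none) (hfin : (shapeOf T ∪ C).Finite)
    (hconn : (shapeOf T ∪ C).OrdConnected) :
    SlideInvariant (A - 1) (addDots C (toDotted T)) where
  finite := shapeOf_addDots_toDotted (T := T) ▸ hfin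
  ordConnected := shapeOf_addDots_toDotted (T := T) ▸ hconn
  lt_of_lt α β x y h hα hβ :=
    hT α β h x y ((addDots_toDotted_eq_inl_iff hC).mp hα)
      ((addDots_toDotted_eq_inl_iff hC).mp hβ)
  lt_of_dot_lt _ β y _ _ hβ := by
    have := hA β y ((addDots_toDotted_eq_inl_iff hC).mp hβ)
    omega
  le_of_lt_dot α β x h hα hβ := by
    have := hbelow β (addDots_toDotted_eq_dot_iff.mp hβ) α h
    simp [(addDots_toDotted_eq_inl_iff hC).mp hα] at this
  not_dot_lt_dot α β h hα hβ :=
    hCanti α (addDots_toDotted_eq_dot_iff.mp hα) β (addDots_toDotted_eq_dot_iff.mp hβ) h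

end Start

section Erasure

variable {L : Type}

def IsErasure (Q : ℤ → Prop) (D' D : L → Option ZDot) : Prop :=
  ∀ α, D' α = D α ∨ (D' α = none ∧ ∃ x, Q x ∧ D α = some (.inl x))

variable [PartialOrder L] {Q : ℤ → Prop} {D D' : L → Option ZDot}

theorem IsErasure.swapVal {v : ℤ} (hv : ¬ Q v) (h : IsErasure Q D' D) :
    IsErasure Q (swapVal (.inl v) dot D') (swapVal (.inl v) dot D) := by
  have hkeep : ∀ w : ZDot, (∀ x, Q x → w ≠ .inl x) →
      ∀ β, D' β = some w ↔ D β = some w := by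
    intro w hw β
    rcases h β with hβ | ⟨hβ, x, hx, hDβ⟩
    · rw [hβ]
    · simpa [hβ, hDβ] using (hw x hx).symm
  intro α
  rcases h α with hα | ⟨hα, x, hx, hDα⟩
  · exact .inl (swapVal_apply_congr hα (hkeep _ fun x hx hvx => hv (Sum.inl_injective hvx ▸ hx))
      (hkeep _ fun _ _ => Sum.inr_ne_inl))
  · exact .inr ⟨swapVal_eq_none_iff.mpr hα, x, hx,
      (swapVal_eq_inl_iff_of_ne fun hxv : x = v => hv (hxv ▸ hx)).mpr hDα⟩

theorem IsErasure.swapUp {a : ℤ} {n : ℕ} (hv : ∀ i < n, ¬ Q (a + i)) (h : IsErasure Q D' D) :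
    IsErasure Q (swapUp a n D') (swapUp a n D) := by
  induction n with
  | zero => exact h
  | succ n ih => exact (ih fun i hi => hv i (by omega)).swapVal (hv n (by omega))

end Erasure

section Window

variable {L : Type}

theorem restrictInt_eq_some_iff {D : L → Option ZDot} {α : L} {x : ℤ} :
    restrictInt D α = some x ↔ D α = some (.inl x) := by
  rcases hD : D α with _ | y | _ <;> simp [restrictInt, hD]

theorem restrictVals_eq_some_iff {T : L → Option ℤ} {a b : ℤ} {α : L} {x : ℤ} :
    restrictVals T a b α = some x ↔ T α = some x ∧ a ≤ x ∧ x ≤ b := by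
  rcases hT : T α with _ | y <;> simp [restrictVals, hT]
  grind

theorem isErasure_addDots_restrictVals {D : L → Option ZDot} {C : Finset L}
    (hC : ∀ α, α ∈ C ↔ D α = some dot) (a b : ℤ) :
    IsErasure (fun x => ¬ (a ≤ x ∧ x ≤ b))
      (addDots C (toDotted (restrictVals (restrictInt D) a b))) D := by
  intro α
  by_cases hα : α ∈ C
  · simp [addDots, hα, (hC α).mp hα]
  rcases hD : D α with _ | x | _
  · simp [addDots, toDotted, restrictVals, restrictInt, hα, hD]
  · by_cases hx : a ≤ x ∧ x ≤ b
    · simp [addDots, toDotted, restrictVals, restrictInt, hα, hD, hx]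
    · refine .inr ⟨?_, x, hx, rfl⟩
      simp [addDots, toDotted, restrictVals, restrictInt, hα, hD, hx]
  · exact absurd ((hC α).mpr hD) hα

variable [PartialOrder L]

theorem restrictVals_restrictInt_swapUp {D : L → Option ZDot} {C : Finset L}
    (hC : ∀ α, α ∈ C ↔ D α = some dot) (a b : ℤ) (r : ℕ) :
    restrictVals (restrictInt (swapUp a ((b - a + 1).toNat + r) D)) a b =
      restrictInt (swapUp a (b - a + 1).toNat
        (addDots C (toDotted (restrictVals (restrictInt D) a b)))) := by
  set n := (b - a + 1).toNat
  have hrun := (isErasure_addDots_restrictVals hC a b).swapUp (a := a) (n := n)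
    fun i hi => by omega
  set E := addDots C (toDotted (restrictVals (restrictInt D) a b))
  have hwin : ∀ α x, swapUp a n E α = some (.inl x) → a ≤ x ∧ x ≤ b := by
    intro α x h
    obtain ⟨β, hβ⟩ := exists_eq_of_swapUp_eq h
    exact (restrictVals_eq_some_iff.mp (eq_some_of_addDots_toDotted_eq_inl hβ)).2
  funext α
  refine Option.ext fun x => ?_
  rw [restrictVals_eq_some_iff, restrictInt_eq_some_iff, restrictInt_eq_some_iff, swapUp_add]
  constructor
  · rintro ⟨h, hx⟩
    rw [swapUp_eq_inl_iff_of_notMem (by omega)] at h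
    rcases hrun α with he | ⟨-, y, hy, h'⟩
    · rwa [he]
    · rw [h'] at h
      exact absurd (Sum.inl_injective (Option.some_injective _ h) ▸ hx) hy
  · intro h
    have hx := hwin α x h
    refine ⟨?_, hx⟩
    rw [swapUp_eq_inl_iff_of_notMem (by omega)]
    rcases hrun α with he | ⟨he, -⟩
    · rwa [← he]
    · simp [he] at h

end Window

section Slide

variable {L : Type} [PartialOrder L]

def slideUp (a b : ℤ) (C : Finset L) (T : L → Option ℤ) : L → Option ℤ :=
  restrictInt (swapUp a (b - a + 1).toNat (addDots C (toDotted T)))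

variable {T : L → Option ℤ} {C : Finset L} {A B : ℤ}

theorem increasing_slideUp (hinv : SlideInvariant (A - 1) (addDots C (toDotted T))) :
    Increasing (slideUp A B C T) := fun _ _ h _ _ hx hy =>
  (hinv.swapUp _).lt_of_lt h (restrictInt_eq_some_iff.mp hx) (restrictInt_eq_some_iff.mp hy)

theorem valuesIn_slideUp {a b : ℤ} (hT : ValuesIn T a b) : ValuesIn (slideUp A B C T) a b :=
  fun _ x hx =>
    have ⟨β, hβ⟩ := exists_eq_of_swapUp_eq (restrictInt_eq_some_iff.mp hx)
    hT β x (eq_some_of_addDots_toDotted_eq_inl hβ)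

theorem swapUp_addDots_toDotted_eq_inl_iff (hC : ∀ c ∈ C, T c = none) {m : ℕ} {x : ℤ}
    (hx : A + m ≤ x) {α : L} :
    swapUp A m (addDots C (toDotted T)) α = some (.inl x) ↔ T α = some x :=
  (swapUp_eq_inl_iff_of_notMem (by omega) _ α).trans (addDots_toDotted_eq_inl_iff hC)

theorem mem_or_lt_of_swapUp_addDots_toDotted_eq_dot (hC : ∀ c ∈ C, T c = none) {m : ℕ} {c : L}
    (h : swapUp A m (addDots C (toDotted T)) c = some dot) :
    c ∈ C ∨ ∃ x < A + m, T c = some x := by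
  have hc : c ∈ shapeOf (swapUp A m (addDots C (toDotted T))) := by simp [shapeOf, h]
  rw [shapeOf_swapUp, shapeOf_addDots_toDotted] at hc
  rcases hc with hT | hc
  · obtain ⟨x, hx⟩ := Option.ne_none_iff_exists'.mp hT
    refine .inr ⟨x, not_le.mp fun hxa => ?_, hx⟩
    have := (swapUp_addDots_toDotted_eq_inl_iff hC hxa).mpr hx
    simp [h] at this
  · exact .inl hc

theorem not_lt_of_swapUp_addDots_toDotted_eq_dot
    (hinv : SlideInvariant (A - 1) (addDots C (toDotted T))) (hC : ∀ c ∈ C, T c = none)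
    {m : ℕ} {c d : L} (h : swapUp A m (addDots C (toDotted T)) c = some dot)
    (hd : d ∈ C ∨ ∃ x < A + m, T d = some x) : ¬ c < d := by
  intro hcd
  have hDm := hinv.swapUp m
  have hdD : d ∈ shapeOf (swapUp A m (addDots C (toDotted T))) := by
    rw [shapeOf_swapUp, shapeOf_addDots_toDotted]
    rcases hd with hd | ⟨x, -, hx⟩
    exacts [.inr hd, .inl (by simp [shapeOf, hx])]
  rcases hDd : swapUp A m (addDots C (toDotted T)) d with _ | y | _
  · exact hdD hDd
  · have hy := hDm.lt_of_dot_lt hcd h hDd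
    have hTd := (swapUp_addDots_toDotted_eq_inl_iff hC (by omega)).mp hDd
    rcases hd with hd | ⟨x, hxa, hx⟩
    · simp [hC d hd] at hTd
    · rw [hx, Option.some_inj] at hTd
      omega
  · exact hDm.not_dot_lt_dot hcd h hDd

theorem restrictVals_slideUp (hinv : SlideInvariant (A - 1) (addDots C (toDotted T)))
    (hC : ∀ c ∈ C, T c = none) {a b : ℤ} (hAa : A ≤ a) (hab : a ≤ b) (hbB : b ≤ B) :
    ∃ C' : Finset L, (∀ c ∈ C', c ∈ C ∨ ∃ x < a, T c = some x) ∧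
      (∀ c ∈ C', ∀ d, (d ∈ C ∨ ∃ x < a, T d = some x) → ¬ c < d) ∧
      restrictVals (slideUp A B C T) a b = slideUp a b C' (restrictVals T a b) := by
  obtain ⟨m, rfl⟩ : ∃ m : ℕ, a = A + m := ⟨(a - A).toNat, by omega⟩
  set Dm := swapUp A m (addDots C (toDotted T))
  obtain ⟨C', hC'⟩ : ∃ C' : Finset L, ∀ α, α ∈ C' ↔ Dm α = some dot :=
    ⟨((hinv.swapUp m).finite.subset fun α (h : Dm α = some dot) =>
      show Dm α ≠ none by simp [h]).toFinset,
      fun α => Set.Finite.mem_toFinset _⟩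
  refine ⟨C', fun c hc => mem_or_lt_of_swapUp_addDots_toDotted_eq_dot hC ((hC' c).mp hc),
    fun c hc d => not_lt_of_swapUp_addDots_toDotted_eq_dot hinv hC ((hC' c).mp hc), ?_⟩
  have hsplit : swapUp A (B - A + 1).toNat (addDots C (toDotted T)) =
      swapUp (A + m) ((b - (A + m) + 1).toNat + (B - b).toNat) Dm := by
    rw [show (B - A + 1).toNat = m + ((b - (A + m) + 1).toNat + (B - b).toNat) by omega,
      swapUp_add]
  have hrestrict : restrictVals (restrictInt Dm) (A + m) b = restrictVals T (A + m) b := by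
    funext α
    refine Option.ext fun x => ?_
    simp only [restrictVals_eq_some_iff, restrictInt_eq_some_iff]
    exact ⟨fun ⟨h, hx⟩ => ⟨(swapUp_addDots_toDotted_eq_inl_iff hC hx.1).mp h, hx⟩,
      fun ⟨h, hx⟩ => ⟨(swapUp_addDots_toDotted_eq_inl_iff hC hx.1).mpr h, hx⟩⟩
  rw [slideUp, hsplit, restrictVals_restrictInt_swapUp hC', hrestrict, slideUp]

end Slide

theorem IsLowerSet.ordConnected_sdiff {P : Type} [PartialOrder P] {s t : Set P}
    (hs : IsLowerSet s) (ht : IsLowerSet t) : (s \ t).OrdConnected :=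
  hs.ordConnected.inter ht.compl.ordConnected

section Shapes

variable {L : Type}

theorem StraightShape.isLowerSet [PartialOrder L] {lam : Finset L} (h : StraightShape lam) :
    IsLowerSet (lam : Set L) := fun _ _ hba ha => h _ ha _ hba

variable {lam nu : Finset L} {T : L → Option ℤ}

theorem ne_none_iff_of_shapeOf_eq (hshape : shapeOf T = (nu : Set L) \ (lam : Set L)) {α : L} :
    T α ≠ none ↔ α ∈ nu ∧ α ∉ lam :=
  Set.ext_iff.mp hshape α

theorem mem_sdiff_of_eq_some (hshape : shapeOf T = (nu : Set L) \ (lam : Set L)) {α : L} {x : ℤ}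
    (h : T α = some x) : α ∈ nu ∧ α ∉ lam :=
  (ne_none_iff_of_shapeOf_eq hshape).mp (by simp [h])

theorem eq_none_of_mem_inner (hshape : shapeOf T = (nu : Set L) \ (lam : Set L)) {α : L}
    (hα : α ∈ lam) : T α = none :=
  not_not.mp fun h => ((ne_none_iff_of_shapeOf_eq hshape).mp h).2 hα

theorem eq_none_of_notMem_outer (hshape : shapeOf T = (nu : Set L) \ (lam : Set L)) {α : L}
    (hα : α ∉ nu) : T α = none :=
  not_not.mp fun h => hα ((ne_none_iff_of_shapeOf_eq hshape).mp h).1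

def lowerCut (lam nu : Finset L) (T : L → Option ℤ) (t : ℤ) : Finset L :=
  lam ∪ nu.filter fun α => ∃ x ≤ t, T α = some x

theorem mem_lowerCut {t : ℤ} {α : L} :
    α ∈ lowerCut lam nu T t ↔ α ∈ lam ∨ α ∈ nu ∧ ∃ x ≤ t, T α = some x := by
  simp [lowerCut]

theorem lowerCut_mono {t t' : ℤ} (h : t ≤ t') : lowerCut lam nu T t ⊆ lowerCut lam nu T t' :=
  Finset.union_subset_union_right fun _ hα =>
    have ⟨hαnu, x, hx, hTx⟩ := Finset.mem_filter.mp hα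
    Finset.mem_filter.mpr ⟨hαnu, x, hx.trans h, hTx⟩

theorem shapeOf_restrictVals (hshape : shapeOf T = (nu : Set L) \ (lam : Set L)) (a b : ℤ) :
    shapeOf (restrictVals T a b) =
      (lowerCut lam nu T b : Set L) \ (lowerCut lam nu T (min (a - 1) b) : Set L) := by
  ext α
  simp only [shapeOf, Set.mem_sdiff, Finset.mem_coe, mem_lowerCut, Set.mem_ofPred_eq,
    Option.ne_none_iff_exists', restrictVals_eq_some_iff]
  constructor
  · rintro ⟨x, hx, hax, hxb⟩
    obtain ⟨hαnu, hαlam⟩ := mem_sdiff_of_eq_some hshape hx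
    refine ⟨.inr ⟨hαnu, x, hxb, hx⟩, ?_⟩
    rintro (h | ⟨-, y, hy, hTy⟩)
    · exact hαlam h
    · rw [hx, Option.some_inj] at hTy
      omega
  · rintro ⟨h | ⟨hαnu, x, hxb, hx⟩, hnot⟩
    · exact absurd (.inl h) hnot
    · exact ⟨x, hx, by_contra fun hax => hnot (.inr ⟨hαnu, x, by omega, hx⟩), hxb⟩

variable [PartialOrder L]

theorem straightShape_lowerCut (hskew : IsSkewPair lam nu)
    (hshape : shapeOf T = (nu : Set L) \ (lam : Set L)) (hT : Increasing T) (t : ℤ) :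
    StraightShape (lowerCut lam nu T t) := by
  intro α hα β hβα
  rw [mem_lowerCut] at hα ⊢
  rcases hα with hα | ⟨hαnu, x, hxt, hx⟩
  · exact .inl (hskew.1 α hα β hβα)
  by_cases hβ : β ∈ lam
  · exact .inl hβ
  have hβnu := hskew.2.1 α hαnu β hβα
  obtain ⟨y, hy⟩ :=
    Option.ne_none_iff_exists'.mp ((ne_none_iff_of_shapeOf_eq hshape).mpr ⟨hβnu, hβ⟩)
  obtain rfl | hlt := hβα.eq_or_lt
  · exact .inr ⟨hαnu, x, hxt, hx⟩
  · exact .inr ⟨hβnu, y, ((hT β α hlt y x hy hx).le).trans hxt, hy⟩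

theorem isSkewPair_lowerCut (hskew : IsSkewPair lam nu)
    (hshape : shapeOf T = (nu : Set L) \ (lam : Set L)) (hT : Increasing T) {t t' : ℤ}
    (h : t ≤ t') :
    IsSkewPair (lowerCut lam nu T t) (lowerCut lam nu T t') :=
  ⟨straightShape_lowerCut hskew hshape hT t, straightShape_lowerCut hskew hshape hT t',
    lowerCut_mono h⟩

end Shapes

section Restriction

variable {L : Type} {T T' : L → Option ℤ}

theorem restrictVals_eq_of_valuesIn {A B : ℤ} (hT : ValuesIn T A B) (a b : ℤ) :
    restrictVals T a b = restrictVals T (max a A) (min b B) := by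
  funext α
  refine Option.ext fun x => ?_
  simp only [restrictVals_eq_some_iff, max_le_iff, le_min_iff]
  constructor <;> rintro ⟨hx, h⟩ <;> have := hT α x hx <;> exact ⟨hx, by omega⟩

theorem restrictVals_eq_none_of_lt {a b : ℤ} (h : b < a) :
    restrictVals T a b = fun _ => none := by
  funext α
  refine Option.ext fun x => ?_
  simp only [restrictVals_eq_some_iff, reduceCtorEq, iff_false]
  omega

theorem reflGen_restrictVals {R : (L → Option ℤ) → (L → Option ℤ) → Prop} {A B : ℤ}
    (hT : ValuesIn T A B) (hT' : ValuesIn T' A B)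
    (h : ∀ a b, A ≤ a → a ≤ b → b ≤ B → R (restrictVals T a b) (restrictVals T' a b))
    (a b : ℤ) :
    Relation.ReflGen R (restrictVals T a b) (restrictVals T' a b) := by
  rw [restrictVals_eq_of_valuesIn hT, restrictVals_eq_of_valuesIn hT']
  by_cases hab : max a A ≤ min b B
  · exact .single (h _ _ (le_max_right a A) hab (min_le_right b B))
  · rw [restrictVals_eq_none_of_lt (not_le.mp hab), restrictVals_eq_none_of_lt (not_le.mp hab)]

variable [PartialOrder L]

theorem increasing_restrictVals (hT : Increasing T) (a b : ℤ) : Increasing (restrictVals T a b) :=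
  fun α β h x y hx hy =>
    hT α β h x y (restrictVals_eq_some_iff.mp hx).1 (restrictVals_eq_some_iff.mp hy).1

theorem IncreasingSkewTableau.restrictVals (hT : IncreasingSkewTableau T) (a b : ℤ) :
    IncreasingSkewTableau (restrictVals T a b) := by
  obtain ⟨⟨lam, nu, hskew, hshape⟩, hinc⟩ := hT
  exact ⟨⟨_, _, isSkewPair_lowerCut hskew hshape hinc (min_le_right (a - 1) b),
    shapeOf_restrictVals hshape a b⟩, increasing_restrictVals hinc a b⟩

end Restriction

section Forward

variable {L : Type} [PartialOrder L] {lam nu C : Finset L} {T T' : L → Option ℤ}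

theorem slideInvariant_of_forward (hskew : IsSkewPair lam nu)
    (hshape : shapeOf T = (nu : Set L) \ (lam : Set L)) (hT : Increasing T) {A B : ℤ}
    (hvals : ValuesIn T A B) (hC : ∀ c ∈ C, c ∈ lam ∧ ∀ d ∈ lam, ¬ c < d) :
    SlideInvariant (A - 1) (addDots C (toDotted T)) := by
  have hlower : IsLowerSet ((lam : Set L) \ C) := by
    rintro α β hβα ⟨hα, hαC⟩
    refine ⟨StraightShape.isLowerSet hskew.1 hβα hα, fun hβC => ?_⟩
    obtain rfl | hlt := hβα.eq_or_lt
    exacts [hαC hβC, (hC β hβC).2 α hα hlt]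
  have hset : shapeOf T ∪ C = (nu : Set L) \ ((lam : Set L) \ C) := by
    have : ∀ α ∈ C, α ∈ nu := fun α hα => hskew.2.2 (hC α hα).1
    ext α
    simp only [hshape, Set.mem_union, Set.mem_sdiff, Finset.mem_coe]
    grind
  refine slideInvariant_addDots hT (fun α x h => (hvals α x h).1)
    (fun c hc => eq_none_of_mem_inner hshape (hC c hc).1)
    (fun c hc d hd => (hC c hc).2 d (hC d hd).1)
    (fun c hc α hα => eq_none_of_mem_inner hshape (hskew.1 c (hC c hc).1 α hα.le)) ?_ ?_
  · rw [hset]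
    exact nu.finite_toSet.subset Set.sdiff_subset
  · rw [hset]
    exact (StraightShape.isLowerSet hskew.2.1).ordConnected_sdiff hlower

theorem mem_lowerCut_and_not_lt (hskew : IsSkewPair lam nu)
    (hshape : shapeOf T = (nu : Set L) \ (lam : Set L))
    (hC : ∀ c ∈ C, c ∈ lam ∧ ∀ d ∈ lam, ¬ c < d) {a : ℤ} {c : L}
    (hc : c ∈ C ∨ ∃ x < a, T c = some x)
    (hcd : ∀ d, (d ∈ C ∨ ∃ x < a, T d = some x) → ¬ c < d) :
    c ∈ lowerCut lam nu T (a - 1) ∧ ∀ d ∈ lowerCut lam nu T (a - 1), ¬ c < d := by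
  refine ⟨?_, fun d hd hlt => ?_⟩
  · rcases hc with hc | ⟨x, hxa, hx⟩
    · exact mem_lowerCut.mpr (.inl (hC c hc).1)
    · exact mem_lowerCut.mpr (.inr ⟨(mem_sdiff_of_eq_some hshape hx).1, x, by omega, hx⟩)
  rcases mem_lowerCut.mp hd with hd | ⟨-, y, hya, hy⟩
  · rcases hc with hc | ⟨x, -, hx⟩
    · exact (hC c hc).2 d hd hlt
    · simp [eq_none_of_mem_inner hshape (hskew.1 d hd c hlt.le)] at hx
  · exact hcd d (.inr ⟨y, by omega, hy⟩) hlt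

theorem IsForwardSlide.restrictVals (h : IsForwardSlide T T') (hT : Increasing T) (a b : ℤ) :
    Relation.ReflGen IsForwardSlide (restrictVals T a b) (restrictVals T' a b) := by
  obtain ⟨lam, nu, C, A, B, hskew, hshape, hvals, hC, rfl⟩ := h
  have hinv := slideInvariant_of_forward hskew hshape hT hvals hC
  refine reflGen_restrictVals hvals (valuesIn_slideUp hvals) (fun a b hAa hab hbB => ?_) a b
  obtain ⟨C', hC'C, hC'max, heq⟩ :=
    restrictVals_slideUp hinv (fun c hc => eq_none_of_mem_inner hshape (hC c hc).1) hAa hab hbB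
  refine ⟨_, _, C', a, b, isSkewPair_lowerCut hskew hshape hT (by omega : a - 1 ≤ b), ?_,
    fun α x hx => (restrictVals_eq_some_iff.mp hx).2,
    fun c hc => mem_lowerCut_and_not_lt hskew hshape hC (hC'C c hc) (hC'max c hc), heq⟩
  rw [shapeOf_restrictVals hshape, min_eq_left (by omega)]

theorem IsForwardSlide.increasing (h : IsForwardSlide T T') (hT : Increasing T) :
    Increasing T' := by
  obtain ⟨lam, nu, C, A, B, hskew, hshape, hvals, hC, rfl⟩ := h
  exact increasing_slideUp (slideInvariant_of_forward hskew hshape hT hvals hC)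

end Forward

section Duality

open OrderDual

variable {L V W : Type}

def dualMap (f : V → W) (T : L → Option V) : Lᵒᵈ → Option W := fun α =>
  (T (ofDual α)).map f

theorem dualMap_injective {f : V → W} (hf : Function.Injective f) :
    Function.Injective (dualMap (L := L) f) := fun _ _ h =>
  funext fun α => Option.map_injective hf (congrFun h (toDual α))

theorem dualMap_eq_some_iff {f : V → W} (hf : Function.Injective f) {T : L → Option V}
    {α : Lᵒᵈ} {v : V} : dualMap f T α = some (f v) ↔ T (ofDual α) = some v := by
  simp [dualMap, hf.eq_iff]

theorem neighbor_toDual_iff [PartialOrder L] {α β : L} :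
    Neighbor (L := Lᵒᵈ) (toDual α) (toDual β) ↔ Neighbor α β := by
  simp only [Neighbor, toDual_covBy_toDual_iff, or_comm]

theorem swapVal_dualMap [PartialOrder L] {f : V → W} (hf : Function.Injective f) (s s' : V)
    (T : L → Option V) : swapVal (f s) (f s') (dualMap f T) = dualMap f (swapVal s s' T) := by
  funext α
  have hnbr : ∀ v, (∃ β : Lᵒᵈ, Neighbor α β ∧ T (ofDual β) = some v) ↔
      ∃ β, Neighbor (ofDual α) β ∧ T β = some v := fun v =>
    OrderDual.exists.trans <|
      exists_congr fun β => and_congr_left' (neighbor_toDual_iff (α := ofDual α))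
  show _ = (swapVal s s' T (ofDual α)).map f
  simp only [swapVal, dualMap_eq_some_iff hf, hnbr]
  split_ifs <;> rfl

def negZDot : ZDot → ZDot := Sum.map (fun x => -x) id

theorem negZDot_injective : Function.Injective negZDot :=
  Sum.map_injective.mpr ⟨neg_injective, Function.injective_id⟩

theorem swapUp_dualMap [PartialOrder L] (a : ℤ) (n : ℕ) (D : L → Option ZDot) :
    swapUp a n (dualMap negZDot D) = dualMap negZDot (swapDown (-a) n D) := by
  induction n with
  | zero => rfl
  | succ n ih =>
    have hv : (Sum.inl (a + n) : ZDot) = negZDot (.inl (-a - n)) := by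
      simp [negZDot, add_comm]
    rw [swapUp, ih, hv, show (Sum.inr () : ZDot) = negZDot dot from rfl,
      swapVal_dualMap negZDot_injective]
    rfl

theorem addDots_dualMap (C : Finset L) (D : L → Option ZDot) :
    addDots (C.map toDual.toEmbedding) (dualMap negZDot D) = dualMap negZDot (addDots C D) := by
  funext α
  by_cases hα : ofDual α ∈ C <;> simp [addDots, dualMap, Finset.mem_map_equiv, hα, negZDot]

theorem toDotted_dualMap (T : L → Option ℤ) :
    toDotted (dualMap (fun x => -x) T) = dualMap negZDot (toDotted T) := by
  funext α
  simp only [toDotted, dualMap]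
  cases T (ofDual α) <;> rfl

theorem restrictInt_dualMap (D : L → Option ZDot) :
    restrictInt (dualMap negZDot D) = dualMap (fun x => -x) (restrictInt D) := by
  funext α
  simp only [restrictInt, dualMap]
  rcases D (ofDual α) with _ | _ | _ <;> rfl

theorem restrictVals_dualMap (T : L → Option ℤ) (a b : ℤ) :
    restrictVals (dualMap (fun x => -x) T) (-b) (-a) =
      dualMap (fun x => -x) (restrictVals T a b) := by
  funext α
  simp only [restrictVals, dualMap]
  rcases T (ofDual α) with _ | x
  · rfl
  · simp only [Option.map_some, Option.bind_some]
    split_ifs <;> first | rfl | omega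

theorem dualMap_neg_eq_some_iff {T : L → Option ℤ} {α : L} {x : ℤ} :
    dualMap (fun x => -x) T (toDual α) = some x ↔ T α = some (-x) := by
  rw [← neg_neg x, dualMap_eq_some_iff neg_injective, neg_neg, ofDual_toDual]

theorem valuesIn_dualMap_iff {T : L → Option ℤ} {a b : ℤ} :
    ValuesIn (dualMap (fun x => -x) T) (-b) (-a) ↔ ValuesIn T a b := by
  constructor
  · intro h α x hx
    have := h (toDual α) (-x) (by rwa [dualMap_neg_eq_some_iff, neg_neg])
    omega
  · intro h α x hx
    have := h (ofDual α) (-x) (dualMap_neg_eq_some_iff (α := ofDual α) |>.mp hx)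
    omega

theorem shapeOf_dualMap (f : V → W) (T : L → Option V) :
    shapeOf (dualMap f T) = ofDual ⁻¹' shapeOf T := by
  ext α
  simp [shapeOf, dualMap]

end Duality

section Reverse

open OrderDual

variable {L : Type} [PartialOrder L] {lam nu C : Finset L} {T T' : L → Option ℤ}

def slideDown (a b : ℤ) (C : Finset L) (T : L → Option ℤ) : L → Option ℤ :=
  restrictInt (swapDown b (b - a + 1).toNat (addDots C (toDotted T)))

theorem slideUp_dualMap (a b : ℤ) (C : Finset L) (T : L → Option ℤ) :
    slideUp (-b) (-a) (C.map toDual.toEmbedding) (dualMap (fun x => -x) T) =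
      dualMap (fun x => -x) (slideDown a b C T) := by
  rw [slideUp, slideDown, toDotted_dualMap, addDots_dualMap, show -a - -b + 1 = b - a + 1 by ring,
    swapUp_dualMap, neg_neg, restrictInt_dualMap]

theorem increasing_dualMap_iff : Increasing (dualMap (fun x => -x) T) ↔ Increasing T := by
  constructor
  · intro h α β hαβ x y hx hy
    have := h (toDual β) (toDual α) hαβ (-y) (-x) (by rwa [dualMap_neg_eq_some_iff, neg_neg])
      (by rwa [dualMap_neg_eq_some_iff, neg_neg])
    omega
  · intro h α β hαβ x y hx hy
    have := h (ofDual β) (ofDual α) hαβ (-y) (-x)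
      (dualMap_neg_eq_some_iff (α := ofDual β) |>.mp hy)
      (dualMap_neg_eq_some_iff (α := ofDual α) |>.mp hx)
    omega

theorem increasing_slideDown {A B : ℤ}
    (hinv : SlideInvariant (-B - 1)
      (addDots (C.map toDual.toEmbedding) (toDotted (dualMap (fun x => -x) T)))) :
    Increasing (slideDown A B C T) :=
  increasing_dualMap_iff.mp (slideUp_dualMap A B C T ▸ increasing_slideUp hinv)

theorem valuesIn_slideDown {A B a b : ℤ} (hT : ValuesIn T a b) :
    ValuesIn (slideDown A B C T) a b :=
  valuesIn_dualMap_iff.mp <|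
    slideUp_dualMap A B C T ▸ valuesIn_slideUp (valuesIn_dualMap_iff.mpr hT)

theorem slideInvariant_of_reverse (hskew : IsSkewPair lam nu)
    (hshape : shapeOf T = (nu : Set L) \ (lam : Set L)) (hT : Increasing T) {A B : ℤ}
    (hvals : ValuesIn T A B) (hC : ∀ c ∈ C, c ∉ nu ∧ ∀ d, d ∉ nu → ¬ d < c) :
    SlideInvariant (-B - 1)
      (addDots (C.map toDual.toEmbedding) (toDotted (dualMap (fun x => -x) T))) := by
  have hnone : ∀ α, α ∉ nu → T α = none := fun _ => eq_none_of_notMem_outer hshape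
  have hlower : IsLowerSet ((nu : Set L) ∪ C) := by
    rintro α β hβα (hα | hα)
    · exact .inl (StraightShape.isLowerSet hskew.2.1 hβα hα)
    · obtain rfl | hlt := hβα.eq_or_lt
      · exact .inr hα
      · exact .inl (not_not.mp fun hβ => (hC α hα).2 β hβ hlt)
  have hset : shapeOf (dualMap (fun x => -x) T) ∪ ↑(C.map toDual.toEmbedding) =
      ofDual ⁻¹' (((nu : Set L) ∪ C) \ lam) := by
    have : ∀ α ∈ C, α ∉ lam := fun α hα h => (hC α hα).1 (hskew.2.2 h)
    ext α
    simp only [shapeOf_dualMap, hshape, Finset.coe_map, Equiv.coe_toEmbedding, Set.mem_union,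
      Set.mem_preimage, Set.mem_sdiff, Finset.mem_coe, Set.mem_image_equiv, toDual_symm_eq]
    grind
  refine slideInvariant_addDots (increasing_dualMap_iff.mpr hT)
    (fun α x h => (valuesIn_dualMap_iff.mpr hvals α x h).1)
    (fun c hc => Option.map_eq_none_iff.mpr (hnone _ (hC _ (Finset.mem_map_equiv.mp hc)).1))
    (fun c hc d hd => (hC _ (Finset.mem_map_equiv.mp hc)).2 _ (hC _ (Finset.mem_map_equiv.mp hd)).1)
    (fun c hc α hα => ?_) ?_ ?_
  · refine Option.map_eq_none_iff.mpr (hnone _ fun hα' => ?_)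
    exact (hC _ (Finset.mem_map_equiv.mp hc)).1 (StraightShape.isLowerSet hskew.2.1 hα.le hα')
  · rw [hset]
    exact ((nu.finite_toSet.union C.finite_toSet).subset Set.sdiff_subset).preimage
      ofDual.injective.injOn
  · rw [hset, Set.ordConnected_dual]
    exact hlower.ordConnected_sdiff (StraightShape.isLowerSet hskew.1)

theorem restrictVals_slideDown {A B : ℤ}
    (hinv : SlideInvariant (-B - 1)
      (addDots (C.map toDual.toEmbedding) (toDotted (dualMap (fun x => -x) T))))
    (hC : ∀ c ∈ C, T c = none) {a b : ℤ} (hAa : A ≤ a) (hab : a ≤ b) (hbB : b ≤ B) :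
    ∃ C' : Finset L, (∀ c ∈ C', c ∈ C ∨ ∃ x > b, T c = some x) ∧
      (∀ c ∈ C', ∀ d, (d ∈ C ∨ ∃ x > b, T d = some x) → ¬ d < c) ∧
      restrictVals (slideDown A B C T) a b = slideDown a b C' (restrictVals T a b) := by
  have hCdual : ∀ c ∈ C.map toDual.toEmbedding, dualMap (fun x => -x) T c = none := fun c hc =>
    Option.map_eq_none_iff.mpr (hC _ (Finset.mem_map_equiv.mp hc))
  obtain ⟨C', hC'C, hC'max, heq⟩ :=
    restrictVals_slideUp hinv hCdual (neg_le_neg hbB) (neg_le_neg hab) (neg_le_neg hAa)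
  have hC' : (C'.map ofDual.toEmbedding).map toDual.toEmbedding = C' := by
    ext
    simp
  have hmem : ∀ {c : L} {s : Finset L}, toDual c ∈ s.map toDual.toEmbedding ↔ c ∈ s := by
    simp
  refine ⟨C'.map ofDual.toEmbedding, fun c hc => ?_, fun c hc d hd hdc => ?_, ?_⟩
  · rcases hC'C (toDual c) (by simpa using hc) with h | ⟨x, hx, hTx⟩
    · exact .inl (hmem.mp h)
    · exact .inr ⟨-x, by omega, dualMap_neg_eq_some_iff.mp hTx⟩
  · refine hC'max (toDual c) (by simpa using hc) (toDual d) ?_ hdc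
    rcases hd with h | ⟨x, hx, hTx⟩
    · exact .inl (hmem.mpr h)
    · exact .inr ⟨-x, by omega, dualMap_neg_eq_some_iff.mpr (by rwa [neg_neg])⟩
  · apply dualMap_injective neg_injective
    rw [← restrictVals_dualMap, ← slideUp_dualMap, ← slideUp_dualMap, ← restrictVals_dualMap,
      hC']
    exact heq

theorem notMem_lowerCut_and_not_lt (hskew : IsSkewPair lam nu)
    (hshape : shapeOf T = (nu : Set L) \ (lam : Set L))
    (hC : ∀ c ∈ C, c ∉ nu ∧ ∀ d, d ∉ nu → ¬ d < c) {b : ℤ} {c : L}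
    (hc : c ∈ C ∨ ∃ x > b, T c = some x)
    (hcd : ∀ d, (d ∈ C ∨ ∃ x > b, T d = some x) → ¬ d < c) :
    c ∉ lowerCut lam nu T b ∧ ∀ d, d ∉ lowerCut lam nu T b → ¬ d < c := by
  refine ⟨fun hcb => ?_, fun d hd hlt => ?_⟩
  · rcases hc with hc | ⟨x, hxb, hx⟩
    · rcases mem_lowerCut.mp hcb with h | ⟨h, -⟩
      exacts [(hC c hc).1 (hskew.2.2 h), (hC c hc).1 h]
    · rcases mem_lowerCut.mp hcb with h | ⟨-, y, hyb, hy⟩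
      · exact (mem_sdiff_of_eq_some hshape hx).2 h
      · rw [hx, Option.some_inj] at hy
        omega
  by_cases hdnu : d ∈ nu
  · have hdlam : d ∉ lam := fun h => hd (mem_lowerCut.mpr (.inl h))
    obtain ⟨y, hy⟩ := Option.ne_none_iff_exists'.mp
      ((ne_none_iff_of_shapeOf_eq hshape).mpr ⟨hdnu, hdlam⟩)
    refine hcd d (.inr ⟨y, ?_, hy⟩) hlt
    by_contra hyb
    exact hd (mem_lowerCut.mpr (.inr ⟨hdnu, y, by omega, hy⟩))
  · rcases hc with hc | ⟨x, -, hx⟩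
    · exact (hC c hc).2 d hdnu hlt
    · exact hdnu (hskew.2.1 c (mem_sdiff_of_eq_some hshape hx).1 d hlt.le)

theorem IsReverseSlide.restrictVals (h : IsReverseSlide T T') (hT : Increasing T) (a b : ℤ) :
    Relation.ReflGen IsReverseSlide (restrictVals T a b) (restrictVals T' a b) := by
  obtain ⟨lam, nu, C, A, B, hskew, hshape, hvals, hC, rfl⟩ := h
  have hinv := slideInvariant_of_reverse hskew hshape hT hvals hC
  refine reflGen_restrictVals hvals (valuesIn_slideDown hvals) (fun a b hAa hab hbB => ?_) a b
  obtain ⟨C', hC'C, hC'min, heq⟩ := restrictVals_slideDown hinv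
    (fun c hc => eq_none_of_notMem_outer hshape (hC c hc).1) hAa hab hbB
  refine ⟨_, _, C', a, b, isSkewPair_lowerCut hskew hshape hT (by omega : a - 1 ≤ b), ?_,
    fun α x hx => (restrictVals_eq_some_iff.mp hx).2,
    fun c hc => notMem_lowerCut_and_not_lt hskew hshape hC (hC'C c hc) (hC'min c hc), heq⟩
  rw [shapeOf_restrictVals hshape, min_eq_left (by omega)]

theorem IsReverseSlide.increasing (h : IsReverseSlide T T') (hT : Increasing T) :
    Increasing T' := by
  obtain ⟨lam, nu, C, A, B, hskew, hshape, hvals, hC, rfl⟩ := h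
  exact increasing_slideDown (slideInvariant_of_reverse hskew hshape hT hvals hC)

end Reverse

section Equivalence

variable {L : Type} [PartialOrder L] {T T' : L → Option ℤ}

theorem JdtEquiv.increasing (h : JdtEquiv T T') (hT : Increasing T) : Increasing T' := by
  induction h with
  | refl => exact hT
  | tail _ hstep ih => exact hstep.elim (·.increasing ih) (·.increasing ih)

theorem JdtEquiv.restrictVals (h : JdtEquiv T T') (hT : Increasing T) (a b : ℤ) :
    JdtEquiv (restrictVals T a b) (restrictVals T' a b) := by
  induction h with
  | refl => exact .refl
  | tail hprev hstep ih =>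
    have hinc := JdtEquiv.increasing hprev hT
    refine ih.trans ?_
    rcases hstep with hstep | hstep
    · exact Relation.ReflTransGen.mono (fun _ _ => Or.inl) _ _
        (hstep.restrictVals hinc a b).to_reflTransGen
    · exact Relation.ReflTransGen.mono (fun _ _ => Or.inr) _ _
        (hstep.restrictVals hinc a b).to_reflTransGen

end Equivalence

theorem restriction_of_jdt_equivalent_tableaux_general {L : Type} [PartialOrder L]
    (T T' : L → Option ℤ)
    (hT : IncreasingSkewTableau T) (hT' : IncreasingSkewTableau T')
    (h : JdtEquiv T T') (a b : ℤ) :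
    IncreasingSkewTableau (restrictVals T a b) ∧
    IncreasingSkewTableau (restrictVals T' a b) ∧
    JdtEquiv (restrictVals T a b) (restrictVals T' a b) :=
  ⟨hT.restrictVals a b, hT'.restrictVals a b, h.restrictVals hT.2 a b⟩

theorem restriction_of_jdt_equivalent_tableaux {L : Type} [PartialOrder L]
    (hmin : {x : L | ∀ y : L, ¬ y < x}.Finite)
    (hcov : ∀ x : L, {y : L | x ⋖ y}.Finite)
    (T T' : L → Option ℤ)
    (hT : IncreasingSkewTableau T) (hT' : IncreasingSkewTableau T')
    (h : JdtEquiv T T') (a b : ℤ) :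
    IncreasingSkewTableau (restrictVals T a b) ∧
    IncreasingSkewTableau (restrictVals T' a b) ∧
    JdtEquiv (restrictVals T a b) (restrictVals T' a b) :=
  restriction_of_jdt_equivalent_tableaux_general T T' hT hT' h a b
end
end

section
/- Let T be a weakly increasing tableau of hook-closed shape in ℕ×ℕ. Then all reading words of T are pairwise K-Knuth equivalent. -/
/-!
Induct on the number of boxes. The first box of a reading order is one that no condition (i)–(iii)
forces to come after another box; removing it leaves a reading order of a smaller hook-closed
shape. So it suffices to compare two reading orders starting with different such boxes `P` and `Q`.
They are incomparable in the north-east order, say `P` is strictly north-west of `Q`. Among the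
remaining boxes weakly south-west of the box `Z` above `Q`, take a south-westmost one, `M`. It lies
in the row of `Z`, strictly east of `P`, may be read right after `P` and `Q`, and
`T P < T M ≤ T Z < T Q`. Hence `P Q M …` and `Q P M …` are both reading orders, and their words
differ by the move `(a, b, c) ≡ (b, a, c)` for `a < c < b`.
-/

open Classical

noncomputable section

/-- The basic K-Knuth relations. -/
inductive KKnuthStep : List ℤ → List ℤ → Prop
  | dup (u v : List ℤ) (a : ℤ) : KKnuthStep (u ++ [a, a] ++ v) (u ++ [a] ++ v)
  | aba (u v : List ℤ) (a b : ℤ) : KKnuthStep (u ++ [a, b, a] ++ v) (u ++ [b, a, b] ++ v)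
  | acb (u v : List ℤ) (a b c : ℤ) (h1 : b < a) (h2 : a < c) :
      KKnuthStep (u ++ [a, b, c] ++ v) (u ++ [a, c, b] ++ v)
  | bac (u v : List ℤ) (a b c : ℤ) (h1 : a < c) (h2 : c < b) :
      KKnuthStep (u ++ [a, b, c] ++ v) (u ++ [b, a, c] ++ v)

/-- K-Knuth equivalence: the symmetric transitive closure of the basic relations. -/
def KKnuth : List ℤ → List ℤ → Prop := Relation.EqvGen KKnuthStep

/-- A hook-closed shape in `ℕ × ℕ`. -/
def HookClosed (θ : Finset (ℕ × ℕ)) : Prop :=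
  ∀ p ∈ θ, ∀ q ∈ θ, p.1 ≤ q.1 → p.2 ≤ q.2 →
    (∀ c : ℕ, p.2 ≤ c → c ≤ q.2 → (p.1, c) ∈ θ) ∧
    (∀ r : ℕ, p.1 ≤ r → r ≤ q.1 → (r, q.2) ∈ θ)

/-- A weakly increasing tableau of shape `θ`: rows weakly increase from left to
right and columns weakly increase from top to bottom. -/
def WeaklyIncr (θ : Finset (ℕ × ℕ)) (T : ℕ × ℕ → ℤ) : Prop :=
  ∀ p ∈ θ, ∀ q ∈ θ, ((p.1 = q.1 ∧ p.2 ≤ q.2) ∨ (p.2 = q.2 ∧ p.1 ≤ q.1)) → T p ≤ T q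

/-- `w` is a reading word of the tableau `T` of shape `θ`. -/
def IsReadingWord (θ : Finset (ℕ × ℕ)) (T : ℕ × ℕ → ℤ) (w : List ℤ) : Prop :=
  ∃ ord : List (ℕ × ℕ), ord.Nodup ∧ (∀ p : ℕ × ℕ, p ∈ ord ↔ p ∈ θ) ∧ w = ord.map T ∧
    (∀ p ∈ θ, ∀ q ∈ θ, p ≠ q → q.1 ≤ p.1 → p.2 ≤ q.2 →
      ord.idxOf p < ord.idxOf q) ∧
    (∀ p ∈ θ, 1 ≤ p.1 → (p.1 - 1, p.2) ∈ θ → T (p.1 - 1, p.2) = T p →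
      ∀ q ∈ θ, q.1 < p.1 → ord.idxOf p < ord.idxOf q) ∧
    (∀ p ∈ θ, (p.1, p.2 + 1) ∈ θ → T (p.1, p.2 + 1) = T p →
      ∀ q ∈ θ, p.2 < q.2 → ord.idxOf p < ord.idxOf q)


theorem List.idxOf_erase_lt_idxOf_erase {α : Type*} [BEq α] [LawfulBEq α] {l : List α}
    {s p q : α} (hp : p ≠ s) (hq : q ≠ s) (h : l.idxOf p < l.idxOf q) :
    (l.erase s).idxOf p < (l.erase s).idxOf q := by
  induction l with
  | nil => simp at h
  | cons x t ih =>
    by_cases hxs : x = s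
    · subst hxs
      simpa [List.idxOf_cons_ne _ (Ne.symm hp), List.idxOf_cons_ne _ (Ne.symm hq)] using h
    rw [List.erase_cons_tail (by simpa using hxs)]
    by_cases hxp : x = p
    · subst hxp
      have hxq : x ≠ q := by rintro rfl; simp at h
      simp [List.idxOf_cons_ne _ hxq]
    by_cases hxq : x = q
    · subst hxq
      simp at h
    simp only [List.idxOf_cons_ne _ hxp, List.idxOf_cons_ne _ hxq] at h ⊢
    exact Nat.succ_lt_succ (ih (Nat.lt_of_succ_lt_succ h))

theorem KKnuthStep.cons {u v : List ℤ} (x : ℤ) (h : KKnuthStep u v) :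
    KKnuthStep (x :: u) (x :: v) := by
  cases h with
  | dup u v a => simpa using KKnuthStep.dup (x :: u) v a
  | aba u v a b => simpa using KKnuthStep.aba (x :: u) v a b
  | acb u v a b c h1 h2 => simpa using KKnuthStep.acb (x :: u) v a b c h1 h2
  | bac u v a b c h1 h2 => simpa using KKnuthStep.bac (x :: u) v a b c h1 h2

theorem KKnuth.cons {u v : List ℤ} (x : ℤ) (h : KKnuth u v) : KKnuth (x :: u) (x :: v) := by
  induction h with
  | rel u v h => exact .rel _ _ (h.cons x)
  | refl u => exact .refl _
  | symm u v _ ih => exact .symm _ _ ih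
  | trans u v w _ _ ih₁ ih₂ => exact .trans _ _ _ ih₁ ih₂

theorem KKnuth.symm {u v : List ℤ} (h : KKnuth u v) : KKnuth v u := Relation.EqvGen.symm _ _ h

theorem KKnuth.trans {u v w : List ℤ} (h₁ : KKnuth u v) (h₂ : KKnuth v w) : KKnuth u w :=
  Relation.EqvGen.trans _ _ _ h₁ h₂

section Tableau

variable {θ θ' : Finset (ℕ × ℕ)} {T : ℕ × ℕ → ℤ} {p q s P Q M : ℕ × ℕ}

theorem WeaklyIncr.mono (hT : WeaklyIncr θ T) (hsub : θ' ⊆ θ) : WeaklyIncr θ' T :=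
  fun p hp q hq h => hT p (hsub hp) q (hsub hq) h

theorem WeaklyIncr.le_of_row (hT : WeaklyIncr θ T) (hp : p ∈ θ) (hq : q ∈ θ) (h₁ : p.1 = q.1)
    (h₂ : p.2 ≤ q.2) : T p ≤ T q :=
  hT p hp q hq (.inl ⟨h₁, h₂⟩)

theorem WeaklyIncr.le_of_col (hT : WeaklyIncr θ T) (hp : p ∈ θ) (hq : q ∈ θ) (h₁ : p.1 ≤ q.1)
    (h₂ : p.2 = q.2) : T p ≤ T q :=
  hT p hp q hq (.inr ⟨h₂, h₁⟩)

def MustPrecede (θ : Finset (ℕ × ℕ)) (T : ℕ × ℕ → ℤ) (p q : ℕ × ℕ) : Prop :=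
  p ∈ θ ∧ q ∈ θ ∧
    ((p ≠ q ∧ q.1 ≤ p.1 ∧ p.2 ≤ q.2) ∨
     (1 ≤ p.1 ∧ (p.1 - 1, p.2) ∈ θ ∧ T (p.1 - 1, p.2) = T p ∧ q.1 < p.1) ∨
     ((p.1, p.2 + 1) ∈ θ ∧ T (p.1, p.2 + 1) = T p ∧ p.2 < q.2))

structure IsReadingOrder (θ : Finset (ℕ × ℕ)) (T : ℕ × ℕ → ℤ) (ord : List (ℕ × ℕ)) : Prop where
  nodup : ord.Nodup
  mem_iff : ∀ p, p ∈ ord ↔ p ∈ θ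
  idxOf_lt : ∀ p q, MustPrecede θ T p q → ord.idxOf p < ord.idxOf q

structure IsReadableFirst (θ : Finset (ℕ × ℕ)) (T : ℕ × ℕ → ℤ) (s : ℕ × ℕ) : Prop where
  mem : s ∈ θ
  not_mustPrecede : ∀ p, ¬ MustPrecede θ T p s

theorem IsReadingWord.exists_isReadingOrder {w : List ℤ} (hw : IsReadingWord θ T w) :
    ∃ ord, IsReadingOrder θ T ord ∧ w = ord.map T := by
  obtain ⟨ord, hnd, hmem, rfl, hne, habove, hright⟩ := hw
  refine ⟨ord, ⟨hnd, hmem, ?_⟩, rfl⟩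
  rintro p q ⟨hp, hq, h | h | h⟩
  · exact hne p hp q hq h.1 h.2.1 h.2.2
  · exact habove p hp h.1 h.2.1 h.2.2.1 q hq h.2.2.2
  · exact hright p hp h.1 h.2.1 q hq h.2.2

theorem MustPrecede.mono (h : MustPrecede θ' T p q) (hsub : θ' ⊆ θ) : MustPrecede θ T p q := by
  obtain ⟨hp, hq, h | h | h⟩ := h
  · exact ⟨hsub hp, hsub hq, .inl h⟩
  · exact ⟨hsub hp, hsub hq, .inr (.inl ⟨h.1, hsub h.2.1, h.2.2⟩)⟩
  · exact ⟨hsub hp, hsub hq, .inr (.inr ⟨hsub h.1, h.2⟩)⟩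

theorem IsReadableFirst.mono (hs : IsReadableFirst θ T s) (hsub : θ' ⊆ θ) (hs' : s ∈ θ') :
    IsReadableFirst θ' T s :=
  ⟨hs', fun p hp => hs.not_mustPrecede p (hp.mono hsub)⟩

theorem IsReadableFirst.eq_of_southWest (hs : IsReadableFirst θ T s) (hp : p ∈ θ)
    (h₁ : s.1 ≤ p.1) (h₂ : p.2 ≤ s.2) : p = s := by
  by_contra hne
  exact hs.not_mustPrecede p ⟨hp, hs.mem, .inl ⟨hne, h₁, h₂⟩⟩

theorem IsReadableFirst.ne_above (hP : IsReadableFirst θ T P) (hQ : Q ∈ θ) (h : P.1 < Q.1)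
    (hZ : (Q.1 - 1, Q.2) ∈ θ) : T (Q.1 - 1, Q.2) ≠ T Q := fun heq =>
  hP.not_mustPrecede Q ⟨hQ, hP.mem, .inr (.inl ⟨by omega, hZ, heq, h⟩)⟩

theorem IsReadableFirst.ne_right (hQ : IsReadableFirst θ T Q) (hP : P ∈ θ) (h : P.2 < Q.2)
    (hR : (P.1, P.2 + 1) ∈ θ) : T (P.1, P.2 + 1) ≠ T P := fun heq =>
  hQ.not_mustPrecede P ⟨hP, hQ.mem, .inr (.inr ⟨hR, heq, h⟩)⟩

/-- The neighbours named in conditions (ii) and (iii) lie north-east of `p`, so none of them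
is `s`. -/
theorem MustPrecede.erase (h : MustPrecede θ T p q) (hs : IsReadableFirst θ T s) (hp : p ≠ s)
    (hq : q ≠ s) : MustPrecede (θ.erase s) T p q := by
  obtain ⟨hpθ, hqθ, h | h | h⟩ := h
  · exact ⟨Finset.mem_erase.2 ⟨hp, hpθ⟩, Finset.mem_erase.2 ⟨hq, hqθ⟩, .inl h⟩
  · have hne : (p.1 - 1, p.2) ≠ s := fun heq =>
      hp (hs.eq_of_southWest hpθ (by rw [← heq]; omega) (by rw [← heq]))
    exact ⟨Finset.mem_erase.2 ⟨hp, hpθ⟩, Finset.mem_erase.2 ⟨hq, hqθ⟩,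
      .inr (.inl ⟨h.1, Finset.mem_erase.2 ⟨hne, h.2.1⟩, h.2.2⟩)⟩
  · have hne : (p.1, p.2 + 1) ≠ s := fun heq =>
      hp (hs.eq_of_southWest hpθ (by rw [← heq]) (by rw [← heq]; omega))
    exact ⟨Finset.mem_erase.2 ⟨hp, hpθ⟩, Finset.mem_erase.2 ⟨hq, hqθ⟩,
      .inr (.inr ⟨Finset.mem_erase.2 ⟨hne, h.1⟩, h.2⟩)⟩

theorem HookClosed.erase (hθ : HookClosed θ) (hs : IsReadableFirst θ T s) :
    HookClosed (θ.erase s) := by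
  intro p hp q hq h₁ h₂
  obtain ⟨hpne, hpθ⟩ := Finset.mem_erase.1 hp
  obtain ⟨hqne, hqθ⟩ := Finset.mem_erase.1 hq
  obtain ⟨hrow, hcol⟩ := hθ p hpθ q hqθ h₁ h₂
  refine ⟨fun c hc₁ hc₂ => Finset.mem_erase.2 ⟨fun heq => hpne ?_, hrow c hc₁ hc₂⟩,
    fun r hr₁ hr₂ => Finset.mem_erase.2 ⟨fun heq => hqne ?_, hcol r hr₁ hr₂⟩⟩
  · exact hs.eq_of_southWest hpθ (by rw [← heq]) (by rw [← heq]; exact hc₁)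
  · exact hs.eq_of_southWest hqθ (by rw [← heq]; exact hr₂) (by rw [← heq])

namespace IsReadingOrder

variable {o : List (ℕ × ℕ)}

theorem erase (ho : IsReadingOrder θ T o) (s : ℕ × ℕ) :
    IsReadingOrder (θ.erase s) T (o.erase s) where
  nodup := ho.nodup.erase s
  mem_iff p := by rw [ho.nodup.mem_erase_iff, Finset.mem_erase, ho.mem_iff]
  idxOf_lt p q h := List.idxOf_erase_lt_idxOf_erase (Finset.mem_erase.1 h.1).1
    (Finset.mem_erase.1 h.2.1).1 (ho.idxOf_lt p q (h.mono (Finset.erase_subset s θ)))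

theorem cons (hs : IsReadableFirst θ T s) (ho : IsReadingOrder (θ.erase s) T o) :
    IsReadingOrder θ T (s :: o) where
  nodup := List.nodup_cons.2 ⟨fun h => (Finset.mem_erase.1 ((ho.mem_iff s).1 h)).1 rfl, ho.nodup⟩
  mem_iff p := by
    rw [List.mem_cons, ho.mem_iff, Finset.mem_erase]
    by_cases hps : p = s
    · simp [hps, hs.mem]
    · simp [hps]
  idxOf_lt p q h := by
    have hqs : q ≠ s := by rintro rfl; exact hs.not_mustPrecede p h
    rw [List.idxOf_cons_ne _ (Ne.symm hqs)]
    by_cases hps : p = s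
    · rw [hps, List.idxOf_cons_self]
      exact Nat.succ_pos _
    · rw [List.idxOf_cons_ne _ (Ne.symm hps)]
      exact Nat.succ_lt_succ (ho.idxOf_lt p q (h.erase hs hps hqs))

theorem isReadableFirst_head (ho : IsReadingOrder θ T (s :: o)) : IsReadableFirst θ T s :=
  ⟨(ho.mem_iff s).1 List.mem_cons_self, fun p hp => by
    simpa using ho.idxOf_lt p s hp⟩

theorem tail (ho : IsReadingOrder θ T (s :: o)) : IsReadingOrder (θ.erase s) T o := by
  simpa using ho.erase s

theorem exists_swap_of_isReadableFirst (ho : IsReadingOrder θ T o) (hP : IsReadableFirst θ T P)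
    (hQ : IsReadableFirst θ T Q) (hPQ : P ≠ Q) (hM : IsReadableFirst ((θ.erase P).erase Q) T M) :
    ∃ r, IsReadingOrder θ T (P :: Q :: M :: r) ∧ IsReadingOrder θ T (Q :: P :: M :: r) := by
  have hr := (((ho.erase P).erase Q).erase M).cons hM
  have hr' : IsReadingOrder ((θ.erase Q).erase P) T _ := Finset.erase_right_comm (s := θ) ▸ hr
  exact ⟨_,
    (hr.cons (hQ.mono (Finset.erase_subset P θ) (Finset.mem_erase.2 ⟨hPQ.symm, hQ.mem⟩))).cons hP,
    (hr'.cons (hP.mono (Finset.erase_subset Q θ) (Finset.mem_erase.2 ⟨hPQ, hP.mem⟩))).cons hQ⟩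

end IsReadingOrder

theorem Finset.exists_southWestmost (S : Finset (ℕ × ℕ)) (hS : S.Nonempty) :
    ∃ M ∈ S, ∀ y ∈ S, M.1 ≤ y.1 → y.2 ≤ M.2 → y = M := by
  obtain ⟨M, hM, hmin⟩ := S.exists_min_image (fun y => (y.2 : ℤ) - y.1) hS
  refine ⟨M, hM, fun y hy h₁ h₂ => ?_⟩
  have := hmin y hy
  ext <;> omega

theorem exists_isReadableFirst_between (hθ : HookClosed θ) (hT : WeaklyIncr θ T)
    (hP : IsReadableFirst θ T P) (hQ : IsReadableFirst θ T Q) (h₁ : P.1 < Q.1) (h₂ : P.2 < Q.2) :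
    ∃ M, IsReadableFirst ((θ.erase P).erase Q) T M ∧ T P < T M ∧ T M < T Q := by
  obtain ⟨hrow, hcol⟩ := hθ P hP.mem Q hQ.mem h₁.le h₂.le
  set θ' := (θ.erase P).erase Q
  have hθ' : θ' ⊆ θ := (Finset.erase_subset Q _).trans (Finset.erase_subset P θ)
  have hZ : (Q.1 - 1, Q.2) ∈ θ := hcol _ (by omega) (by omega)
  have hZ' : (Q.1 - 1, Q.2) ∈ θ' := by
    simp only [θ', Finset.mem_erase, hZ, ne_eq, Prod.ext_iff, and_true]
    omega
  obtain ⟨M, hMS, hextreme⟩ := (θ'.filter fun y => Q.1 - 1 ≤ y.1 ∧ y.2 ≤ Q.2).exists_southWestmost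
    ⟨_, Finset.mem_filter.2 ⟨hZ', le_rfl, le_rfl⟩⟩
  obtain ⟨hMθ', hM₁, hM₂⟩ := Finset.mem_filter.1 hMS
  obtain ⟨hMQ, hMP, hMθ⟩ : M ≠ Q ∧ M ≠ P ∧ M ∈ θ := by simpa [θ', and_assoc] using hMθ'
  have hMrow : M.1 = Q.1 - 1 := by
    by_contra hne
    exact hMQ (hQ.eq_of_southWest hMθ (by omega) hM₂)
  have hPM : P.2 < M.2 := by
    by_contra hle
    exact hMP (hP.eq_of_southWest hMθ (by omega) (by omega))
  have hR : (P.1, P.2 + 1) ∈ θ := hrow _ (by omega) (by omega)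
  have hY : (P.1, M.2) ∈ θ := hrow _ (by omega) hM₂
  refine ⟨M, ⟨hMθ', ?_⟩, ?_, ?_⟩
  · rintro y ⟨hy, -, ⟨hne, hy₁, hy₂⟩ | ⟨hy₀, hyZ, heq, hy₁⟩ | ⟨hyR, heq, hy₂⟩⟩
    · exact hne (hextreme y (Finset.mem_filter.2 ⟨hy, by omega, by omega⟩) hy₁ hy₂)
    · exact hP.not_mustPrecede y ⟨hθ' hy, hP.mem, .inr (.inl ⟨hy₀, hθ' hyZ, heq, by omega⟩)⟩
    · exact hQ.not_mustPrecede y ⟨hθ' hy, hQ.mem, .inr (.inr ⟨hθ' hyR, heq, by omega⟩)⟩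
  · calc T P < T (P.1, P.2 + 1) :=
          lt_of_le_of_ne (hT.le_of_row hP.mem hR rfl (by simp)) (hQ.ne_right hP.mem h₂ hR).symm
      _ ≤ T (P.1, M.2) := hT.le_of_row hR hY rfl (by simp; omega)
      _ ≤ T M := hT.le_of_col hY hMθ (by simp; omega) rfl
  · calc T M ≤ T (Q.1 - 1, Q.2) := hT.le_of_row hMθ hZ hMrow hM₂
      _ < T Q := lt_of_le_of_ne (hT.le_of_col hZ hQ.mem (by simp) rfl) (hP.ne_above hQ.mem h₁ hZ)

theorem exists_kknuth_swap_of_northWest (hθ : HookClosed θ) (hT : WeaklyIncr θ T)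
    {o : List (ℕ × ℕ)} (ho : IsReadingOrder θ T o) (hP : IsReadableFirst θ T P)
    (hQ : IsReadableFirst θ T Q) (h₁ : P.1 < Q.1) (h₂ : P.2 < Q.2) :
    ∃ r, IsReadingOrder θ T (P :: Q :: r) ∧ IsReadingOrder θ T (Q :: P :: r) ∧
      KKnuth ((P :: Q :: r).map T) ((Q :: P :: r).map T) := by
  obtain ⟨M, hM, hPM, hMQ⟩ := exists_isReadableFirst_between hθ hT hP hQ h₁ h₂
  obtain ⟨r, hPQr, hQPr⟩ := ho.exists_swap_of_isReadableFirst hP hQ (by rintro rfl; omega) hM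
  exact ⟨M :: r, hPQr, hQPr, .rel _ _ (by simpa using KKnuthStep.bac [] (r.map T) _ _ _ hPM hMQ)⟩

theorem exists_kknuth_swap (hθ : HookClosed θ) (hT : WeaklyIncr θ T) {o : List (ℕ × ℕ)}
    (ho : IsReadingOrder θ T o) (hP : IsReadableFirst θ T P) (hQ : IsReadableFirst θ T Q)
    (hPQ : P ≠ Q) :
    ∃ r, IsReadingOrder θ T (P :: Q :: r) ∧ IsReadingOrder θ T (Q :: P :: r) ∧
      KKnuth ((P :: Q :: r).map T) ((Q :: P :: r).map T) := by
  have hPQ' : ¬ (P.1 ≤ Q.1 ∧ Q.2 ≤ P.2) := fun h => hPQ (hP.eq_of_southWest hQ.mem h.1 h.2).symm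
  have hQP' : ¬ (Q.1 ≤ P.1 ∧ P.2 ≤ Q.2) := fun h => hPQ (hQ.eq_of_southWest hP.mem h.1 h.2)
  rcases (by omega : (P.1 < Q.1 ∧ P.2 < Q.2) ∨ (Q.1 < P.1 ∧ Q.2 < P.2)) with ⟨h₁, h₂⟩ | ⟨h₁, h₂⟩
  · exact exists_kknuth_swap_of_northWest hθ hT ho hP hQ h₁ h₂
  · obtain ⟨r, hQPr, hPQr, hswap⟩ := exists_kknuth_swap_of_northWest hθ hT ho hQ hP h₁ h₂
    exact ⟨r, hPQr, hQPr, hswap.symm⟩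

theorem IsReadingOrder.kknuth_map (hθ : HookClosed θ) (hT : WeaklyIncr θ T)
    {o o' : List (ℕ × ℕ)} (ho : IsReadingOrder θ T o) (ho' : IsReadingOrder θ T o') :
    KKnuth (o.map T) (o'.map T) := by
  induction θ using Finset.strongInduction generalizing o o' with
  | H θ ih =>
    have hcons : ∀ s u u', IsReadingOrder θ T (s :: u) → IsReadingOrder θ T (s :: u') →
        KKnuth ((s :: u).map T) ((s :: u').map T) := fun s u u' hu hu' =>
      have hs := hu.isReadableFirst_head
      (ih _ (Finset.erase_ssubset hs.mem) (hθ.erase hs) (hT.mono (Finset.erase_subset s θ))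
        hu.tail hu'.tail).cons (T s)
    match o, o', ho, ho' with
    | [], [], _, _ => exact .refl _
    | [], Q :: _, ho, ho' => exact absurd ((ho.mem_iff Q).2 ho'.isReadableFirst_head.mem) (by simp)
    | P :: _, [], ho, ho' => exact absurd ((ho'.mem_iff P).2 ho.isReadableFirst_head.mem) (by simp)
    | P :: t, Q :: t', ho, ho' =>
      by_cases hPQ : P = Q
      · subst hPQ
        exact hcons P t t' ho ho'
      obtain ⟨r, hPQr, hQPr, hswap⟩ :=
        exists_kknuth_swap hθ hT ho ho.isReadableFirst_head ho'.isReadableFirst_head hPQ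
      exact ((hcons P t _ ho hPQr).trans hswap).trans (hcons Q _ t' hQPr ho')

end Tableau

theorem reading_words_kknuth_equivalent
    (θ : Finset (ℕ × ℕ)) (T : ℕ × ℕ → ℤ)
    (hθ : HookClosed θ) (hT : WeaklyIncr θ T)
    (w w' : List ℤ) (hw : IsReadingWord θ T w) (hw' : IsReadingWord θ T w') :
    KKnuth w w' := by
  obtain ⟨o, ho, rfl⟩ := hw.exists_isReadingOrder
  obtain ⟨o', ho', rfl⟩ := hw'.exists_isReadingOrder
  exact ho.kknuth_map hθ hT ho'
end
end
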